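/- Given the Riccati equation B'(τ) = (1/2)λ²(z² − z) − (κξ − ρ̃ελz) B(τ) + (1/2)ε² B(τ)², with constant coefficients on an interval and initial value B(τⱼ), the function B(τ) = B(τⱼ) + ((μ + ν − ε²B(τⱼ))(1 − e^{ν(τ−τⱼ)})) / (ε²(1 − gⱼ e^{ν(τ−τⱼ)})), where μ = κξ − ρ̃ελz, ν = √(μ² − λ²ε²(z² − z)), and gⱼ = (μ + ν − ε²B(τⱼ))/(μ − ν − ε²B(τⱼ)), solves this ODE on the interval (assuming the denominator does not vanish). -/

import Mathlib

/-!
With `p, q = (μ ± ν) / ε²` the hypothesis on `ν²` factors the right-hand side as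
`(ε² / 2) (B - p) (B - q)`. The equation `y' = a (y - p) (y - q)` is solved through `y₀` at `t₀` by
`y₀ + (p - y₀) (1 - E) / (1 - g E)` with `E = exp (a (p - q) (t - t₀))` and
`g = (y₀ - p) / (y₀ - q)`, which is checked by differentiating. For `a = ε² / 2` the rate
`a (p - q)` is `ν`, and this closed form is the paper's.
-/

open Complex

theorem hasDerivAt_cexp_mul_sub (k : ℂ) (t₀ t : ℝ) :
    HasDerivAt (fun s : ℝ => exp (k * (s - t₀))) (k * exp (k * (t - t₀))) t := by
  have h : HasDerivAt (fun s : ℝ => k * ((s : ℂ) - t₀)) k t := by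
    simpa using ((ofRealCLM.hasDerivAt (x := t)).sub_const (t₀ : ℂ)).const_mul k
  simpa [mul_comm] using h.cexp

noncomputable def riccatiClosedForm (a p q y₀ : ℂ) (t₀ s : ℝ) : ℂ :=
  y₀ + (p - y₀) * (1 - exp (a * (p - q) * (s - t₀))) /
    (1 - (y₀ - p) / (y₀ - q) * exp (a * (p - q) * (s - t₀)))

theorem hasDerivAt_riccatiClosedForm {a p q y₀ : ℂ} {t₀ t : ℝ} (hq : y₀ ≠ q)
    (hden : 1 - (y₀ - p) / (y₀ - q) * exp (a * (p - q) * (t - t₀)) ≠ 0) :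
    HasDerivAt (riccatiClosedForm a p q y₀ t₀)
      (a * (riccatiClosedForm a p q y₀ t₀ t - p) * (riccatiClosedForm a p q y₀ t₀ t - q)) t := by
  have hE := hasDerivAt_cexp_mul_sub (a * (p - q)) t₀ t
  refine (((hE.const_sub 1).const_mul (p - y₀)).div
    ((hE.const_mul ((y₀ - p) / (y₀ - q))).const_sub 1) hden |>.const_add y₀).congr_deriv ?_
  simp only [riccatiClosedForm]
  have hg : (y₀ - p) / (y₀ - q) * (y₀ - q) = y₀ - p := div_mul_cancel₀ _ (sub_ne_zero.mpr hq)
  generalize exp (a * (p - q) * (t - t₀)) = E at hden ⊢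
  generalize (y₀ - p) / (y₀ - q) = g at hden hg ⊢
  generalize hD : 1 - g * E = D at hden ⊢
  field_simp
  subst hD
  -- `y - q = (p - q) / (1 - g E)` once `g (y₀ - q) = y₀ - p` is used
  linear_combination a * (y₀ - p) * (1 - g) * E ^ 2 * hg

theorem riccati_rhs_eq_mul_sub_mul_sub {c μ ν e : ℂ} (he : e ≠ 0)
    (hν : ν ^ 2 = μ ^ 2 - 2 * e * c) (y : ℂ) :
    c - μ * y + 1 / 2 * e * y ^ 2 = e / 2 * (y - (μ + ν) / e) * (y - (μ - ν) / e) := by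
  field_simp
  linear_combination hν

theorem div_two_mul_add_div_sub_sub_div {e : ℂ} (he : e ≠ 0) (μ ν : ℂ) :
    e / 2 * ((μ + ν) / e - (μ - ν) / e) = ν := by
  field_simp
  ring

theorem sub_add_div_div_sub_sub_div {e : ℂ} (he : e ≠ 0) (μ ν y₀ : ℂ) :
    (y₀ - (μ + ν) / e) / (y₀ - (μ - ν) / e) = (μ + ν - e * y₀) / (μ - ν - e * y₀) := by
  rw [← neg_div_neg_eq, ← mul_div_mul_left _ _ he]
  congr 1 <;> field_simp <;> ring

theorem riccatiClosedForm_eq {e : ℂ} (he : e ≠ 0) (μ ν y₀ : ℂ) (t₀ s : ℝ) :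
    riccatiClosedForm (e / 2) ((μ + ν) / e) ((μ - ν) / e) y₀ t₀ s =
      y₀ + (μ + ν - e * y₀) * (1 - exp (ν * (s - t₀))) /
        (e * (1 - (μ + ν - e * y₀) / (μ - ν - e * y₀) * exp (ν * (s - t₀)))) := by
  have hp : (μ + ν) / e - y₀ = (μ + ν - e * y₀) / e := by field_simp
  rw [riccatiClosedForm, div_two_mul_add_div_sub_sub_div he, sub_add_div_div_sub_sub_div he, hp,
    div_mul_eq_mul_div, div_div]

theorem riccati_closed_form_solves_ode_general
    (ε lam : ℝ) (z Bj μ ν g : ℂ) (τj : ℝ)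
    (hε : ε ≠ 0)
    (hνsq : ν ^ 2 = μ ^ 2 - (lam : ℂ) ^ 2 * (ε : ℂ) ^ 2 * (z ^ 2 - z))
    (hgden : μ - ν - (ε : ℂ) ^ 2 * Bj ≠ 0)
    (hg : g = (μ + ν - (ε : ℂ) ^ 2 * Bj) / (μ - ν - (ε : ℂ) ^ 2 * Bj))
    (B : ℝ → ℂ)
    (hB : ∀ τ : ℝ, B τ = Bj + ((μ + ν - (ε : ℂ) ^ 2 * Bj) *
        (1 - Complex.exp (ν * (τ - τj)))) /
        ((ε : ℂ) ^ 2 * (1 - g * Complex.exp (ν * (τ - τj)))))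
    (τ : ℝ) (hden : 1 - g * Complex.exp (ν * (τ - τj)) ≠ 0) :
    HasDerivAt B
      ((1 / 2 : ℂ) * (lam : ℂ) ^ 2 * (z ^ 2 - z) - μ * B τ +
        (1 / 2 : ℂ) * (ε : ℂ) ^ 2 * (B τ) ^ 2) τ := by
  have he : (ε : ℂ) ^ 2 ≠ 0 := pow_ne_zero 2 (ofReal_ne_zero.mpr hε)
  have hq : Bj ≠ (μ - ν) / (ε : ℂ) ^ 2 := fun h => hgden (by rw [h, mul_div_cancel₀ _ he, sub_self])
  have hclosed : B = riccatiClosedForm ((ε : ℂ) ^ 2 / 2) ((μ + ν) / (ε : ℂ) ^ 2)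
      ((μ - ν) / (ε : ℂ) ^ 2) Bj τj := by
    funext s
    rw [hB, riccatiClosedForm_eq he, hg]
  have hderiv := hasDerivAt_riccatiClosedForm (t := τ) hq
    (by rwa [div_two_mul_add_div_sub_sub_div he, sub_add_div_div_sub_sub_div he, ← hg])
  rw [← hclosed] at hderiv
  rwa [riccati_rhs_eq_mul_sub_mul_sub (ν := ν) he (by linear_combination hνsq)]

/-- The closed-form function
`B(τ) = B(τⱼ) + ((μ + ν − ε²B(τⱼ))(1 − e^{ν(τ−τⱼ)}))/(ε²(1 − gⱼ e^{ν(τ−τⱼ)}))`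
solves the constant-coefficient Riccati equation
`B' = (1/2)lam²(z² − z) − (κξ − ρ̃εlamz)B + (1/2)ε²B²` wherever the denominator
does not vanish. -/
theorem riccati_closed_form_solves_ode
    (κ ε lam ξ ρ' : ℝ) (z Bj μ ν g : ℂ) (τj : ℝ)
    (hε : ε ≠ 0) (hν : ν ≠ 0)
    (hμ : μ = (κ : ℂ) * ξ - ρ' * ε * lam * z)
    (hνsq : ν ^ 2 = μ ^ 2 - (lam : ℂ) ^ 2 * (ε : ℂ) ^ 2 * (z ^ 2 - z))
    (hgden : μ - ν - (ε : ℂ) ^ 2 * Bj ≠ 0)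
    (hg : g = (μ + ν - (ε : ℂ) ^ 2 * Bj) / (μ - ν - (ε : ℂ) ^ 2 * Bj))
    (B : ℝ → ℂ)
    (hB : ∀ τ : ℝ, B τ = Bj + ((μ + ν - (ε : ℂ) ^ 2 * Bj) *
        (1 - Complex.exp (ν * (τ - τj)))) /
        ((ε : ℂ) ^ 2 * (1 - g * Complex.exp (ν * (τ - τj)))))
    (τ : ℝ) (hden : 1 - g * Complex.exp (ν * (τ - τj)) ≠ 0) :
    HasDerivAt B
      ((1 / 2 : ℂ) * (lam : ℂ) ^ 2 * (z ^ 2 - z) - μ * B τ +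
        (1 / 2 : ℂ) * (ε : ℂ) ^ 2 * (B τ) ^ 2) τ :=
  riccati_closed_form_solves_ode_general ε lam z Bj μ ν g τj hε hνsq hgden hg B hB τ hden
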